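/- The number of nonnegative Bernoulli excursion-type paths of length l from 0 to y≥1 with exactly j peaks starting and ending with an up step equals binomial((l+y)/2-1, j-1)·binomial((l-y)/2-1, j-1)·(y/j). -/

import Mathlib

/-- The value at time `i` of the Bernoulli path with `n` steps encoded by
`f : Fin n → Bool` (`true` = step `+1`, `false` = step `-1`), started at `0`. -/
def pathVal {n : ℕ} (f : Fin n → Bool) (i : ℕ) : ℤ :=
  ∑ j ∈ Finset.range i, (if h : j < n then (if f ⟨j, h⟩ then (1 : ℤ) else -1) else 0)

/-- `x` is a peak: `1 ≤ x ≤ n-1` and `S(x-1) = S(x+1) = S(x) - 1`. -/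
def IsPeak {n : ℕ} (f : Fin n → Bool) (x : ℕ) : Prop :=
  0 < x ∧ x < n ∧ pathVal f x = pathVal f (x - 1) + 1 ∧
    pathVal f (x + 1) = pathVal f x - 1

instance {n : ℕ} (f : Fin n → Bool) (x : ℕ) : Decidable (IsPeak f x) := by
  unfold IsPeak; infer_instance

/-- Number of peaks of the path encoded by `f`. -/
def numPeaks {n : ℕ} (f : Fin n → Bool) : ℕ :=
  ((Finset.range n).filter (fun x => IsPeak f x)).card

/-- Integer binomial coefficient with the convention that it vanishes unless
`0 ≤ p ≤ m`. -/
def ichoose (m p : ℤ) : ℤ :=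
  if 0 ≤ m ∧ 0 ≤ p then ((m.toNat).choose p.toNat : ℤ) else 0

/-- `hchoose num p = binomial (num/2 - 1) p`, with the convention that it
vanishes when `num` is odd (non-integer upper argument) or when the arguments
are out of range. -/
def hchoose (num p : ℤ) : ℤ :=
  if 2 ∣ num then ichoose (num / 2 - 1) p else 0

/-- `G(l,j₁,j₂,x,y) = binomial((l+y-x)/2 - 1, j₁) · binomial((l-y+x)/2 - 1, j₂)`. -/
def G (l j1 j2 x y : ℤ) : ℤ := hchoose (l + y - x) j1 * hchoose (l - y + x) j2

/-- The path stays nonnegative on `[0, n]`. -/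
def IsNonneg {n : ℕ} (f : Fin n → Bool) : Prop :=
  ∀ i ∈ Finset.range (n + 1), 0 ≤ pathVal f i

instance {n : ℕ} (f : Fin n → Bool) : Decidable (IsNonneg f) := by
  unfold IsNonneg; infer_instance

/-!
Remove the last step. An excursion ending with an up step at `y` is an excursion of length
`l - 1` ending at `y - 1` followed by an up step, whatever its last step was; one ending with a
down step at `y` comes from an excursion ending at `y + 1`, and gains a peak exactly when that
excursion ended with an up step. Writing `u` and `d` for the numbers of up- and down-steps,
`j` times either count is a polynomial in binomial coefficients of `u` and `d`, and the two
recursions become identities between these that follow from Pascal's rule and absorption. For a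
single peak one needs instead that the only excursion without peaks is the all-up path.
-/

open Finset

section Paths

variable {n : ℕ} (f : Fin n → Bool)

def stepVal (i : ℕ) : ℤ :=
  if h : i < n then (if f ⟨i, h⟩ then 1 else -1) else 0

def lastStep : ℤ := pathVal f n - pathVal f (n - 1)

lemma pathVal_succ (i : ℕ) : pathVal f (i + 1) = pathVal f i + stepVal f i :=
  sum_range_succ _ i

lemma pathVal_one : pathVal f 1 = stepVal f 0 :=
  sum_range_one _

lemma stepVal_eq_one_or_eq_neg_one {i : ℕ} (hi : i < n) :
    stepVal f i = 1 ∨ stepVal f i = -1 := by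
  unfold stepVal
  split_ifs <;> simp

lemma lastStep_eq_stepVal (hn : 0 < n) : lastStep f = stepVal f (n - 1) := by
  have h := pathVal_succ f (n - 1)
  rw [Nat.sub_add_cancel hn] at h
  rw [lastStep, h]
  ring

lemma lastStep_eq_one_or_eq_neg_one (hn : 0 < n) : lastStep f = 1 ∨ lastStep f = -1 := by
  rw [lastStep_eq_stepVal f hn]
  exact stepVal_eq_one_or_eq_neg_one f (by omega)

lemma isPeak_iff {x : ℕ} :
    IsPeak f x ↔ 0 < x ∧ x < n ∧ stepVal f (x - 1) = 1 ∧ stepVal f x = -1 := by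
  unfold IsPeak
  have hprev := pathVal_succ f (x - 1)
  have hnext := pathVal_succ f x
  constructor <;>
  · rintro ⟨hx, hxn, hup, hdown⟩
    rw [Nat.sub_add_cancel hx] at hprev
    exact ⟨hx, hxn, by omega, by omega⟩

lemma IsNonneg.pathVal_nonneg {f : Fin n → Bool} (h : IsNonneg f) {i : ℕ} (hi : i ≤ n) :
    0 ≤ pathVal f i :=
  h i (mem_range.2 (Nat.lt_succ_of_le hi))

end Paths

section Snoc

variable {n : ℕ} (f : Fin n → Bool) (b : Bool)

lemma stepVal_snoc_of_lt {i : ℕ} (hi : i < n) : stepVal (Fin.snoc f b) i = stepVal f i := by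
  simp [stepVal, hi, Nat.lt_succ_of_lt hi, Fin.snoc, Fin.castLT]

lemma stepVal_snoc_last : stepVal (Fin.snoc f b) n = if b then 1 else -1 := by
  simp [stepVal, Fin.snoc]

lemma pathVal_snoc_of_le {i : ℕ} (hi : i ≤ n) : pathVal (Fin.snoc f b) i = pathVal f i :=
  sum_congr rfl fun _ hk => stepVal_snoc_of_lt f b ((mem_range.1 hk).trans_le hi)

lemma pathVal_snoc_last :
    pathVal (Fin.snoc f b) (n + 1) = pathVal f n + if b then 1 else -1 := by
  rw [pathVal_succ, pathVal_snoc_of_le f b le_rfl, stepVal_snoc_last]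

lemma lastStep_snoc : lastStep (Fin.snoc f b) = if b then 1 else -1 := by
  rw [lastStep_eq_stepVal _ n.succ_pos, Nat.succ_sub_one, stepVal_snoc_last]

lemma isNonneg_snoc :
    IsNonneg (Fin.snoc f b) ↔ IsNonneg f ∧ 0 ≤ pathVal f n + if b then 1 else -1 := by
  rw [← pathVal_snoc_last]
  constructor
  · intro h
    refine ⟨fun i hi => ?_, h.pathVal_nonneg le_rfl⟩
    have hin : i ≤ n := Nat.lt_succ_iff.1 (mem_range.1 hi)
    rw [← pathVal_snoc_of_le f b hin]
    exact h.pathVal_nonneg (hin.trans n.le_succ)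
  · rintro ⟨h, hlast⟩ i hi
    rcases (Nat.lt_succ_iff.1 (mem_range.1 hi)).lt_or_eq with hin | rfl
    · rw [pathVal_snoc_of_le f b (Nat.lt_succ_iff.1 hin)]
      exact h.pathVal_nonneg (Nat.lt_succ_iff.1 hin)
    · exact hlast

lemma isPeak_snoc_of_lt {x : ℕ} (hx : x < n) : IsPeak (Fin.snoc f b) x ↔ IsPeak f x := by
  rw [isPeak_iff, isPeak_iff, stepVal_snoc_of_lt f b hx,
    stepVal_snoc_of_lt f b (lt_of_le_of_lt (Nat.sub_le x 1) hx)]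
  constructor
  · rintro ⟨h0, -, hup, hdown⟩
    exact ⟨h0, hx, hup, hdown⟩
  · rintro ⟨h0, -, hup, hdown⟩
    exact ⟨h0, Nat.lt_succ_of_lt hx, hup, hdown⟩

lemma isPeak_snoc_last (hn : 0 < n) :
    IsPeak (Fin.snoc f b) n ↔ lastStep f = 1 ∧ b = false := by
  rw [isPeak_iff, stepVal_snoc_of_lt f b (Nat.sub_lt hn one_pos), stepVal_snoc_last,
    lastStep_eq_stepVal f hn]
  cases b <;> simp [hn]

lemma numPeaks_snoc (hn : 0 < n) :
    numPeaks (Fin.snoc f b) = numPeaks f + if lastStep f = 1 ∧ b = false then 1 else 0 := by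
  rw [numPeaks, range_add_one, filter_insert,
    filter_congr fun x hx => isPeak_snoc_of_lt f b (mem_range.1 hx), numPeaks]
  split_ifs with hpeak hlast hlast
  · rw [card_insert_of_notMem (by simp)]
  · exact absurd ((isPeak_snoc_last f b hn).1 hpeak) hlast
  · exact absurd ((isPeak_snoc_last f b hn).2 hlast) hpeak
  · rfl

end Snoc

def excursionCount (l : ℕ) (y s : ℤ) (j : ℕ) : ℕ :=
  #{f : Fin l → Bool | pathVal f l = y ∧ IsNonneg f ∧ pathVal f 1 = 1 ∧ lastStep f = s ∧
    numPeaks f = j}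

section Recursion

variable {n : ℕ}

lemma card_filter_eq_sum_snoc (p : (Fin (n + 1) → Bool) → Prop) [DecidablePred p] :
    #{g | p g} = ∑ f : Fin n → Bool,
      ((if p (Fin.snoc f true) then 1 else 0) + if p (Fin.snoc f false) then 1 else 0) := by
  rw [card_filter, ← (Fin.snocEquiv fun _ => Bool).sum_comp, Fintype.sum_prod_type,
    Fintype.sum_bool, sum_add_distrib]
  rfl

lemma excursionCount_succ_up (hn : 0 < n) (y : ℤ) (j : ℕ) :
    excursionCount (n + 1) (y + 1) 1 j = excursionCount n y 1 j + excursionCount n y (-1) j := by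
  rw [excursionCount, card_filter_eq_sum_snoc, excursionCount, excursionCount, card_filter,
    card_filter, ← sum_add_distrib]
  refine sum_congr rfl fun f _ => ?_
  simp only [pathVal_snoc_last, isNonneg_snoc, pathVal_snoc_of_le f _ hn, lastStep_snoc,
    numPeaks_snoc f _ hn]
  by_cases hf : IsNonneg f
  · have := hf.pathVal_nonneg le_rfl
    rcases lastStep_eq_one_or_eq_neg_one f hn with h | h <;> simp [h, hf] <;> split_ifs <;> omega
  · simp [hf]

lemma excursionCount_succ_down (hn : 0 < n) {y : ℤ} (hy : 0 < y) (j : ℕ) :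
    excursionCount (n + 1) (y - 1) (-1) (j + 1) =
      excursionCount n y 1 j + excursionCount n y (-1) (j + 1) := by
  rw [excursionCount, card_filter_eq_sum_snoc, excursionCount, excursionCount, card_filter,
    card_filter, ← sum_add_distrib]
  refine sum_congr rfl fun f _ => ?_
  simp only [pathVal_snoc_last, isNonneg_snoc, pathVal_snoc_of_le f _ hn, lastStep_snoc,
    numPeaks_snoc f _ hn]
  by_cases hf : IsNonneg f
  · rcases lastStep_eq_one_or_eq_neg_one f hn with h | h <;> simp [h, hf] <;> split_ifs <;> omega
  · simp [hf]

end Recursion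

section SmallCases

variable {n : ℕ}

lemma pathVal_le (f : Fin n → Bool) (i : ℕ) : pathVal f i ≤ i := by
  induction i with
  | zero => simp [pathVal]
  | succ i ih =>
    rw [pathVal_succ]
    have : stepVal f i ≤ 1 := by unfold stepVal; split_ifs <;> simp
    push_cast
    omega

lemma numPeaks_eq_zero_of_le_one (hn : n ≤ 1) (f : Fin n → Bool) : numPeaks f = 0 := by
  rw [numPeaks, card_eq_zero, filter_eq_empty_iff]
  rintro x - ⟨hx, hxn, -⟩
  omega

lemma excursionCount_eq_zero_of_le_one (hn : n ≤ 1) (y s : ℤ) {j : ℕ} (hj : j ≠ 0) :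
    excursionCount n y s j = 0 := by
  rw [excursionCount, card_eq_zero, filter_eq_empty_iff]
  rintro f - ⟨-, -, -, -, hpeaks⟩
  exact hj (hpeaks ▸ numPeaks_eq_zero_of_le_one hn f)

lemma excursionCount_eq_zero_of_lt {y : ℤ} (hy : (n : ℤ) < y) (s : ℤ) (j : ℕ) :
    excursionCount n y s j = 0 := by
  rw [excursionCount, card_eq_zero, filter_eq_empty_iff]
  rintro f - ⟨hend, -⟩
  exact (pathVal_le f n).not_gt (hend ▸ hy)

lemma excursionCount_down_eq_zero_of_le {y : ℤ} (hy : (n : ℤ) ≤ y) (j : ℕ) :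
    excursionCount n y (-1) j = 0 := by
  rw [excursionCount, card_eq_zero, filter_eq_empty_iff]
  rintro f - ⟨hend, -, -, hlast, -⟩
  have := pathVal_le f (n - 1)
  rw [lastStep] at hlast
  omega

lemma excursionCount_up_eq_zero_of_nonpos {y : ℤ} (hy : y ≤ 0) (j : ℕ) :
    excursionCount n y 1 j = 0 := by
  rw [excursionCount, card_eq_zero, filter_eq_empty_iff]
  rintro f - ⟨hend, hnonneg, -, hlast, -⟩
  have := hnonneg.pathVal_nonneg (Nat.sub_le n 1)
  rw [lastStep] at hlast
  omega

end SmallCases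

section NoPeaks

variable {n : ℕ}

lemma pathVal_const_true {i : ℕ} (hi : i ≤ n) : pathVal (fun _ : Fin n => true) i = i := by
  induction i with
  | zero => rfl
  | succ i ih =>
    rw [pathVal_succ, ih (Nat.le_of_succ_le hi), stepVal, dif_pos (Nat.lt_of_succ_le hi)]
    push_cast
    rfl

lemma numPeaks_const_true : numPeaks (fun _ : Fin n => true) = 0 := by
  rw [numPeaks, card_eq_zero, filter_eq_empty_iff]
  intro x _ hpeak
  obtain ⟨-, hx, -, hdown⟩ := (isPeak_iff _).1 hpeak
  simp [stepVal, hx] at hdown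

/-- A path that starts upwards turns down for the first time at a peak. -/
lemma eq_const_true_of_numPeaks_eq_zero {f : Fin n → Bool} (hfirst : pathVal f 1 = 1)
    (hpeaks : numPeaks f = 0) : f = fun _ => true := by
  rw [numPeaks, card_eq_zero, filter_eq_empty_iff] at hpeaks
  have hup : ∀ i, i < n → stepVal f i = 1 := by
    intro i
    induction i with
    | zero => exact fun _ => pathVal_one f ▸ hfirst
    | succ i ih =>
      intro hi
      refine (stepVal_eq_one_or_eq_neg_one f hi).resolve_right fun hdown => ?_
      exact hpeaks (mem_range.2 hi) ((isPeak_iff f).2 ⟨i.succ_pos, hi, ih (by omega), hdown⟩)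
  funext i
  simpa [stepVal] using hup i i.isLt

lemma excursionCount_up_zero_peaks (hn : 0 < n) (y : ℤ) :
    excursionCount n y 1 0 = if y = n then 1 else 0 := by
  have hmem : ∀ f : Fin n → Bool, (pathVal f n = y ∧ IsNonneg f ∧ pathVal f 1 = 1 ∧
      lastStep f = 1 ∧ numPeaks f = 0) ↔ f = (fun _ => true) ∧ y = n := by
    intro f
    constructor
    · rintro ⟨hend, -, hfirst, -, hpeaks⟩
      obtain rfl := eq_const_true_of_numPeaks_eq_zero hfirst hpeaks
      exact ⟨rfl, hend ▸ pathVal_const_true le_rfl⟩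
    · rintro ⟨rfl, rfl⟩
      refine ⟨pathVal_const_true le_rfl, fun i hi => ?_, pathVal_const_true hn, ?_,
        numPeaks_const_true⟩
      · rw [pathVal_const_true (Nat.lt_succ_iff.1 (mem_range.1 hi))]
        positivity
      · rw [lastStep, pathVal_const_true le_rfl, pathVal_const_true (Nat.sub_le n 1)]
        omega
  rw [excursionCount, filter_congr fun f _ => hmem f]
  split_ifs with hy <;> simp [hy, filter_eq']

end NoPeaks

section Binomial

lemma ichoose_natCast (a b : ℕ) : ichoose a b = a.choose b := by
  simp [ichoose]

lemma ichoose_of_neg {m : ℤ} (hm : m < 0) (p : ℤ) : ichoose m p = 0 := by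
  rw [ichoose, if_neg (by omega)]

lemma ichoose_zero_right {m : ℤ} (hm : 0 ≤ m) : ichoose m 0 = 1 := by
  lift m to ℕ using hm
  simpa using ichoose_natCast m 0

lemma ichoose_succ_succ {a b : ℤ} (ha : 0 ≤ a) (hb : 0 ≤ b) :
    ichoose (a + 1) (b + 1) = ichoose a b + ichoose a (b + 1) := by
  lift a to ℕ using ha
  lift b to ℕ using hb
  rw [← Nat.cast_add_one, ← Nat.cast_add_one, ichoose_natCast, ichoose_natCast, ichoose_natCast,
    Nat.choose_succ_succ', Nat.cast_add]

lemma succ_mul_ichoose_succ {a b : ℤ} (ha : 0 ≤ a) (hb : 0 ≤ b) :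
    (b + 1) * ichoose a (b + 1) = (a - b) * ichoose a b := by
  lift a to ℕ using ha
  lift b to ℕ using hb
  have habsorb : ((a + 1 : ℕ) : ℤ) * a.choose b = (a + 1).choose (b + 1) * (b + 1 : ℕ) := by
    exact_mod_cast Nat.add_one_mul_choose_eq a b
  have hpascal : ((a + 1).choose (b + 1) : ℤ) = a.choose b + a.choose (b + 1) := by
    exact_mod_cast Nat.choose_succ_succ' a b
  rw [show (b : ℤ) + 1 = (b + 1 : ℕ) by push_cast; ring, ichoose_natCast, ichoose_natCast]
  push_cast at habsorb ⊢
  linear_combination -habsorb - (b + 1 : ℤ) * hpascal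

end Binomial

-- `u` up-steps and `d` down-steps, so length `u + d` and endpoint `u - d`; `k + 1` peaks.
def upClosedForm (u d k : ℤ) : ℤ := ichoose (u - 1) k * ichoose (d - 1) k * (u - d)

def downClosedForm (u d k : ℤ) : ℤ :=
  (u - d + 1) * ichoose u k * ichoose (d - 1) k - (u - d) * ichoose (u - 1) k * ichoose (d - 1) k

lemma upClosedForm_add_one_left (u d k : ℤ) :
    upClosedForm (u + 1) d k = upClosedForm u d k + downClosedForm u d k := by
  simp only [upClosedForm, downClosedForm, add_sub_cancel_right]
  ring

lemma downClosedForm_zero {u d : ℤ} (hu : 1 ≤ u) (hd : 0 ≤ d) :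
    downClosedForm u d 0 = if 0 < d then 1 else 0 := by
  rw [downClosedForm, ichoose_zero_right (m := u) (by omega),
    ichoose_zero_right (m := u - 1) (by omega)]
  split_ifs with hd'
  · rw [ichoose_zero_right (m := d - 1) (by omega)]; ring
  · rw [ichoose_of_neg (m := d - 1) (by omega)]; ring

lemma downClosedForm_add_one_add_one {u d k : ℤ} (hu : 1 ≤ u) (hd : 0 ≤ d) (hk : 0 ≤ k) :
    (k + 1) * downClosedForm u (d + 1) (k + 1) =
      (k + 2) * upClosedForm u d k + (k + 1) * downClosedForm u d (k + 1) := by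
  simp only [upClosedForm, downClosedForm, add_sub_cancel_right]
  rcases hd.eq_or_lt with rfl | hd
  · have hzero : ichoose 0 (k + 1) = 0 := by
      lift k to ℕ using hk
      simpa using ichoose_natCast 0 (k + 1)
    simp [hzero, ichoose_of_neg (show (-1 : ℤ) < 0 by omega)]
  · have hpascal (m : ℤ) (hm : 1 ≤ m) :
        ichoose m (k + 1) = ichoose (m - 1) k + ichoose (m - 1) (k + 1) := by
      simpa using ichoose_succ_succ (a := m - 1) (by omega) hk
    rw [hpascal u hu, hpascal d hd]
    linear_combination ichoose (d - 1) k * succ_mul_ichoose_succ (a := u - 1) (by omega) hk -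
      ichoose (u - 1) k * succ_mul_ichoose_succ (a := d - 1) (by omega) hk

section ClosedForms

variable {u d : ℕ}

lemma excursionCount_up_formula_succ (hn : 0 < u + d)
    (hup : ∀ k : ℕ, (excursionCount (u + d) (u - d) 1 (k + 1) : ℤ) * (k + 1) =
      upClosedForm u d k)
    (hdown : ∀ k : ℕ, (excursionCount (u + d) (u - d) (-1) (k + 1) : ℤ) * (k + 1) =
      downClosedForm u d k) (k : ℕ) :
    (excursionCount (u + 1 + d) ((u + 1 : ℕ) - d) 1 (k + 1) : ℤ) * (k + 1) =
      upClosedForm (u + 1 : ℕ) d k := by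
  rw [Nat.add_right_comm, show ((u + 1 : ℕ) : ℤ) - d = (u - d : ℤ) + 1 by push_cast; ring,
    excursionCount_succ_up hn, Nat.cast_add, add_mul, hup, hdown, Nat.cast_succ,
    upClosedForm_add_one_left]

lemma excursionCount_down_formula_succ (hdu : d < u)
    (hup : ∀ k : ℕ, (excursionCount (u + d) (u - d) 1 (k + 1) : ℤ) * (k + 1) =
      upClosedForm u d k)
    (hdown : ∀ k : ℕ, (excursionCount (u + d) (u - d) (-1) (k + 1) : ℤ) * (k + 1) =
      downClosedForm u d k) (k : ℕ) :
    (excursionCount (u + (d + 1)) (u - (d + 1 : ℕ)) (-1) (k + 1) : ℤ) * (k + 1) =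
      downClosedForm u (d + 1 : ℕ) k := by
  have hn : 0 < u + d := by omega
  rw [← add_assoc, show (u : ℤ) - (d + 1 : ℕ) = (u - d : ℤ) - 1 by push_cast; ring,
    excursionCount_succ_down hn (by omega), Nat.cast_add, Nat.cast_succ]
  rcases k with _ | k
  · have h0 := hdown 0
    simp only [Nat.cast_zero, zero_add, mul_one] at h0 ⊢
    rw [downClosedForm_zero (by omega) (by omega)] at h0
    rw [excursionCount_up_zero_peaks hn, downClosedForm_zero (by omega) (by omega)]
    split_ifs at h0 ⊢ <;> push_cast at * <;> omega
  · apply mul_left_cancel₀ (show ((k : ℤ) + 1) ≠ 0 by positivity)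
    have hdown' := hdown (k + 1)
    push_cast at hdown' ⊢
    rw [downClosedForm_add_one_add_one (by omega) (by omega) (by omega)]
    linear_combination ((k : ℤ) + 2) * hup k + ((k : ℤ) + 1) * hdown'

theorem excursionCount_formulas (n : ℕ) : ∀ u d : ℕ, u + d = n → d ≤ u → ∀ k : ℕ,
    (excursionCount (u + d) (u - d) 1 (k + 1) : ℤ) * (k + 1) = upClosedForm u d k ∧
    (excursionCount (u + d) (u - d) (-1) (k + 1) : ℤ) * (k + 1) = downClosedForm u d k := by
  induction n using Nat.strong_induction_on with
  | _ n ih =>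
    intro u d hn hdu k
    constructor
    · rcases hdu.eq_or_lt with rfl | hdu
      · rw [excursionCount_up_eq_zero_of_nonpos (by simp)]
        simp [upClosedForm]
      obtain ⟨u, rfl⟩ : ∃ u', u = u' + 1 := ⟨u - 1, by omega⟩
      rcases Nat.eq_zero_or_pos (u + d) with h0 | h0
      · obtain ⟨rfl, rfl⟩ : u = 0 ∧ d = 0 := by omega
        rw [excursionCount_eq_zero_of_le_one le_rfl _ _ k.succ_ne_zero]
        simp [upClosedForm, ichoose_of_neg]
      · have hprev := ih (u + d) (by omega) u d rfl (by omega)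
        exact excursionCount_up_formula_succ h0 (fun k => (hprev k).1) (fun k => (hprev k).2) k
    · rcases d with _ | d
      · rw [excursionCount_down_eq_zero_of_le (by simp)]
        simp [downClosedForm, ichoose_of_neg]
      · have hprev := ih (u + d) (by omega) u d rfl (by omega)
        exact excursionCount_down_formula_succ (by omega) (fun k => (hprev k).1)
          (fun k => (hprev k).2) k

end ClosedForms

lemma hchoose_two_mul (u p : ℤ) : hchoose (2 * u) p = ichoose (u - 1) p := by
  rw [hchoose, if_pos (dvd_mul_right 2 u), Int.mul_ediv_cancel_left _ two_ne_zero]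

/-- The number of nonnegative Bernoulli paths of length `l` from `0` to
`y ≥ 1` with exactly `j ≥ 1` peaks, starting and ending with an up step,
equals `binomial((l+y)/2-1, j-1) · binomial((l-y)/2-1, j-1) · (y/j)`
(stated multiplied through by `j`). -/
theorem card_excursion_type_uu (l j : ℕ) (y : ℤ) (hy : 1 ≤ y) (hj : 1 ≤ j)
    (hpar : (l : ℤ) % 2 = y % 2) :
    (((Finset.univ : Finset (Fin l → Bool)).filter
        (fun f => pathVal f l = y ∧ IsNonneg f ∧
          pathVal f 1 = 1 ∧ pathVal f l - pathVal f (l - 1) = 1 ∧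
          numPeaks f = j)).card : ℤ) * (j : ℤ)
      = hchoose ((l : ℤ) + y) ((j : ℤ) - 1) *
        hchoose ((l : ℤ) - y) ((j : ℤ) - 1) * y := by
  change (excursionCount l y 1 j : ℤ) * j = _
  obtain ⟨k, rfl⟩ : ∃ k, j = k + 1 := ⟨j - 1, by omega⟩
  push_cast
  rw [add_sub_cancel_right]
  rcases lt_or_ge (l : ℤ) y with hly | hyl
  · have hzero : hchoose (l - y) k = 0 := by
      rw [hchoose, if_pos (by omega), ichoose_of_neg (by omega)]
    rw [excursionCount_eq_zero_of_lt hly, hzero]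
    simp
  · obtain ⟨u, d, rfl, rfl⟩ : ∃ u d : ℕ, l = u + d ∧ y = u - d :=
      ⟨((l + y) / 2).toNat, ((l - y) / 2).toNat, by omega, by omega⟩
    rw [show ((u + d : ℕ) : ℤ) + (u - d) = 2 * u by push_cast; ring,
      show ((u + d : ℕ) : ℤ) - (u - d) = 2 * d by push_cast; ring,
      hchoose_two_mul, hchoose_two_mul]
    exact (excursionCount_formulas _ u d rfl (by omega) k).1
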